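/- For any MAC W : X1 × X2 → Y on finite alphabets and positive integers k1, k2, the non-signaling assisted success probability is at most the relaxed non-signaling assisted success probability: S^NS(W,k1,k2) ≤ S^{NS̄}(W,k1,k2). -/

import Mathlib

open Finset

/-- A tripartite non-signaling box `P(x1,x2,(j1,j2)|i1,i2,y)` between the two senders
and the receiver, with `k1` and `k2` messages.  Arguments of `P` are in the order
`x1 x2 j1 j2 i1 i2 y`. -/
def IsNSBox {X1 X2 Y : Type*} [Fintype X1] [Fintype X2] [Fintype Y] (k1 k2 : ℕ)
    (P : X1 → X2 → Fin k1 → Fin k2 → Fin k1 → Fin k2 → Y → ℝ) : Prop :=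
  (∀ x1 x2 j1 j2 i1 i2 y, 0 ≤ P x1 x2 j1 j2 i1 i2 y) ∧
  (∀ i1 i2 y, ∑ x1, ∑ x2, ∑ j1, ∑ j2, P x1 x2 j1 j2 i1 i2 y = 1) ∧
  (∀ x2 j1 j2 i1 i1' i2 y,
    ∑ x1, P x1 x2 j1 j2 i1 i2 y = ∑ x1, P x1 x2 j1 j2 i1' i2 y) ∧
  (∀ x1 j1 j2 i1 i2 i2' y,
    ∑ x2, P x1 x2 j1 j2 i1 i2 y = ∑ x2, P x1 x2 j1 j2 i1 i2' y) ∧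
  (∀ x1 x2 i1 i2 y y',
    ∑ j1, ∑ j2, P x1 x2 j1 j2 i1 i2 y = ∑ j1, ∑ j2, P x1 x2 j1 j2 i1 i2 y')

/-- `S^{NS}(W,k1,k2)`: maximum joint success probability with (tripartite)
non-signaling assistance between both senders and the receiver. -/
noncomputable def SNS {X1 X2 Y : Type*} [Fintype X1] [Fintype X2] [Fintype Y]
    (W : X1 → X2 → Y → ℝ) (k1 k2 : ℕ) : ℝ :=
  sSup {s : ℝ | ∃ P : X1 → X2 → Fin k1 → Fin k2 → Fin k1 → Fin k2 → Y → ℝ,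
    IsNSBox k1 k2 P ∧
    s = (1 / ((k1 : ℝ) * (k2 : ℝ))) * ∑ i1, ∑ i2, ∑ x1, ∑ x2, ∑ y,
      W x1 x2 y * P x1 x2 i1 i2 i1 i2 y}

/-- The relaxed non-signaling assisted success probability `S^{NS̄}(W,k1,k2)`,
defined by a relaxation of the non-signaling linear program. -/
noncomputable def SNSbar {X1 X2 Y : Type*} [Fintype X1] [Fintype X2] [Fintype Y]
    (W : X1 → X2 → Y → ℝ) (k1 k2 : ℕ) : ℝ :=
  sSup {s : ℝ | ∃ (r : X1 → X2 → Y → ℝ) (p : X1 → X2 → ℝ),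
    (∀ y, ∑ x1, ∑ x2, r x1 x2 y ≤ 1) ∧
    (∑ x1, ∑ x2, p x1 x2 = (k1 : ℝ) * (k2 : ℝ)) ∧
    (∀ x2 y, (k1 : ℝ) * ∑ x1, r x1 x2 y ≤ ∑ x1, p x1 x2) ∧
    (∀ x1 y, (k2 : ℝ) * ∑ x2, r x1 x2 y ≤ ∑ x2, p x1 x2) ∧
    (∀ x1 x2 y, 0 ≤ r x1 x2 y) ∧ (∀ x1 x2 y, r x1 x2 y ≤ p x1 x2) ∧
    s = (1 / ((k1 : ℝ) * (k2 : ℝ))) * ∑ x1, ∑ x2, ∑ y, W x1 x2 y * r x1 x2 y}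

/-!
A non-signaling box `P` induces a feasible point of the relaxed program with the same value:
`r x1 x2 y = ∑ i, P(x1, x2, i | i, y)` is the weight of correct decoding and
`p x1 x2 = ∑ i, ∑ j, P(x1, x2, j | i, y)` the weight of the channel inputs, both summed over
message pairs `i`; `p` does not depend on `y` because the receiver cannot signal to the senders.
Since the law of the receiver's guess `j` does not depend on the senders' inputs,
`∑ x1, ∑ x2, r = 1`.
For `k1 * ∑ x1, r ≤ ∑ x1, p`, no-signaling from the first sender lets one replace its input
`i1` by an arbitrary `a` in each term of `∑ x1, r`; summing over the `k1` choices of `a` then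
bounds `k1 * ∑ x1, r` by the full marginal. The bound for the second sender is the same
statement for the box with the senders exchanged.
-/

theorem Finset.sum_comm₄ {α β γ δ M : Type*} [Fintype α] [Fintype β] [Fintype γ] [Fintype δ]
    [AddCommMonoid M] (f : α → β → γ → δ → M) :
    ∑ a, ∑ b, ∑ c, ∑ d, f a b c d = ∑ c, ∑ d, ∑ a, ∑ b, f a b c d := by
  simp_rw [sum_comm (s := (univ : Finset β)), sum_comm (s := (univ : Finset α))]

section NSBox

variable {X1 X2 Y : Type*} {k1 k2 : ℕ}

def successWeight (P : X1 → X2 → Fin k1 → Fin k2 → Fin k1 → Fin k2 → Y → ℝ)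
    (x1 : X1) (x2 : X2) (y : Y) : ℝ :=
  ∑ i1, ∑ i2, P x1 x2 i1 i2 i1 i2 y

def inputWeight (P : X1 → X2 → Fin k1 → Fin k2 → Fin k1 → Fin k2 → Y → ℝ)
    (y : Y) (x1 : X1) (x2 : X2) : ℝ :=
  ∑ i1, ∑ i2, ∑ j1, ∑ j2, P x1 x2 j1 j2 i1 i2 y

def swapSenders (P : X1 → X2 → Fin k1 → Fin k2 → Fin k1 → Fin k2 → Y → ℝ) :
    X2 → X1 → Fin k2 → Fin k1 → Fin k2 → Fin k1 → Y → ℝ :=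
  fun x2 x1 j2 j1 i2 i1 y => P x1 x2 j1 j2 i1 i2 y

variable {P : X1 → X2 → Fin k1 → Fin k2 → Fin k1 → Fin k2 → Y → ℝ}

theorem successWeight_swapSenders (x1 : X1) (x2 : X2) (y : Y) :
    successWeight (swapSenders P) x2 x1 y = successWeight P x1 x2 y :=
  sum_comm

theorem inputWeight_swapSenders (y : Y) (x1 : X1) (x2 : X2) :
    inputWeight (swapSenders P) y x2 x1 = inputWeight P y x1 x2 := by
  rw [inputWeight, sum_comm]
  exact sum_congr rfl fun i1 _ => sum_congr rfl fun i2 _ => sum_comm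

variable [Fintype X1] [Fintype X2] [Fintype Y]

theorem sum_mul_successWeight (W : X1 → X2 → Y → ℝ) :
    ∑ i1, ∑ i2, ∑ x1, ∑ x2, ∑ y, W x1 x2 y * P x1 x2 i1 i2 i1 i2 y =
      ∑ x1, ∑ x2, ∑ y, W x1 x2 y * successWeight P x1 x2 y := by
  simp_rw [successWeight, mul_sum]
  rw [sum_comm₄]
  exact sum_congr rfl fun x1 _ => sum_congr rfl fun x2 _ => sum_comm_cycle

theorem IsNSBox.swapSenders (hP : IsNSBox k1 k2 P) : IsNSBox k2 k1 (swapSenders P) := by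
  obtain ⟨hnonneg, hnorm, hsend1, hsend2, hrecv⟩ := hP
  refine ⟨fun x2 x1 j2 j1 i2 i1 y => hnonneg x1 x2 j1 j2 i1 i2 y, fun i2 i1 y => ?_,
    fun x1 j2 j1 i2 i2' i1 y => hsend2 x1 j1 j2 i1 i2 i2' y,
    fun x2 j2 j1 i2 i1 i1' y => hsend1 x2 j1 j2 i1 i1' i2 y, fun x2 x1 i2 i1 y y' => ?_⟩
  · rw [← hnorm i1 i2 y, sum_comm]
    simp_rw [_root_.swapSenders, sum_comm (s := (univ : Finset (Fin k2)))]
  · simp_rw [_root_.swapSenders, sum_comm (s := (univ : Finset (Fin k2)))]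
    exact hrecv x1 x2 i1 i2 y y'

theorem IsNSBox.sum_sum_congr_inputs (hP : IsNSBox k1 k2 P) (j1 : Fin k1) (j2 : Fin k2)
    (i1 i1' : Fin k1) (i2 i2' : Fin k2) (y : Y) :
    ∑ x1, ∑ x2, P x1 x2 j1 j2 i1 i2 y = ∑ x1, ∑ x2, P x1 x2 j1 j2 i1' i2' y := by
  obtain ⟨-, -, hsend1, hsend2, -⟩ := hP
  rw [sum_comm, sum_congr rfl fun x2 _ => hsend1 x2 j1 j2 i1 i1' i2 y, sum_comm]
  exact sum_congr rfl fun x1 _ => hsend2 x1 j1 j2 i1' i2 i2' y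

theorem IsNSBox.sum_sum_successWeight (hP : IsNSBox k1 k2 P) (hk1 : 0 < k1) (hk2 : 0 < k2)
    (y : Y) : ∑ x1, ∑ x2, successWeight P x1 x2 y = 1 := by
  let i1 : Fin k1 := ⟨0, hk1⟩
  let i2 : Fin k2 := ⟨0, hk2⟩
  calc ∑ x1, ∑ x2, successWeight P x1 x2 y
      = ∑ j1, ∑ j2, ∑ x1, ∑ x2, P x1 x2 j1 j2 j1 j2 y := sum_comm₄ _
    _ = ∑ j1, ∑ j2, ∑ x1, ∑ x2, P x1 x2 j1 j2 i1 i2 y := by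
      simp_rw [hP.sum_sum_congr_inputs _ _ _ i1 _ i2]
    _ = ∑ x1, ∑ x2, ∑ j1, ∑ j2, P x1 x2 j1 j2 i1 i2 y := sum_comm₄ _
    _ = 1 := hP.2.1 i1 i2 y

theorem IsNSBox.inputWeight_congr (hP : IsNSBox k1 k2 P) (y y' : Y) :
    inputWeight P y = inputWeight P y' := by
  ext x1 x2
  exact sum_congr rfl fun i1 _ => sum_congr rfl fun i2 _ => hP.2.2.2.2 x1 x2 i1 i2 y y'

theorem IsNSBox.sum_sum_inputWeight (hP : IsNSBox k1 k2 P) (y : Y) :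
    ∑ x1, ∑ x2, inputWeight P y x1 x2 = k1 * k2 := by
  unfold inputWeight
  rw [sum_comm₄]
  simp [hP.2.1]

theorem IsNSBox.successWeight_le_inputWeight (hP : IsNSBox k1 k2 P) (x1 : X1) (x2 : X2)
    (y : Y) : successWeight P x1 x2 y ≤ inputWeight P y x1 x2 := by
  refine sum_le_sum fun i1 _ => sum_le_sum fun i2 _ => ?_
  calc P x1 x2 i1 i2 i1 i2 y ≤ ∑ j2, P x1 x2 i1 j2 i1 i2 y :=
        single_le_sum (fun j2 _ => hP.1 x1 x2 i1 j2 i1 i2 y) (mem_univ i2)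
    _ ≤ ∑ j1, ∑ j2, P x1 x2 j1 j2 i1 i2 y :=
        single_le_sum (f := fun j1 => ∑ j2, P x1 x2 j1 j2 i1 i2 y)
          (fun j1 _ => sum_nonneg fun j2 _ => hP.1 x1 x2 j1 j2 i1 i2 y) (mem_univ i1)

theorem IsNSBox.mul_sum_successWeight_le_fst (hP : IsNSBox k1 k2 P) (x2 : X2) (y : Y) :
    k1 * ∑ x1, successWeight P x1 x2 y ≤ ∑ x1, inputWeight P y x1 x2 := by
  calc k1 * ∑ x1, successWeight P x1 x2 y
      = ∑ _a : Fin k1, ∑ x1, successWeight P x1 x2 y := by simp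
    _ = ∑ a : Fin k1, ∑ i2, ∑ x1, ∑ i1, P x1 x2 i1 i2 a i2 y := by
        refine sum_congr rfl fun a _ => ?_
        calc ∑ x1, successWeight P x1 x2 y
            = ∑ i1, ∑ i2, ∑ x1, P x1 x2 i1 i2 i1 i2 y := sum_comm_cycle.symm
          _ = ∑ i1, ∑ i2, ∑ x1, P x1 x2 i1 i2 a i2 y :=
            sum_congr rfl fun i1 _ => sum_congr rfl fun i2 _ => hP.2.2.1 x2 i1 i2 i1 a i2 y
          _ = ∑ i2, ∑ x1, ∑ i1, P x1 x2 i1 i2 a i2 y := sum_comm_cycle.symm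
    _ ≤ ∑ a : Fin k1, ∑ i2, ∑ x1, ∑ j1, ∑ j2, P x1 x2 j1 j2 a i2 y := by
        gcongr with a _ i2 _ x1 _ j1 _
        exact single_le_sum (fun j2 _ => hP.1 x1 x2 j1 j2 a i2 y) (mem_univ i2)
    _ = ∑ x1, inputWeight P y x1 x2 := sum_comm_cycle

theorem IsNSBox.mul_sum_successWeight_le_snd (hP : IsNSBox k1 k2 P) (x1 : X1) (y : Y) :
    k2 * ∑ x2, successWeight P x1 x2 y ≤ ∑ x2, inputWeight P y x1 x2 := by
  simpa only [successWeight_swapSenders, inputWeight_swapSenders] using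
    hP.swapSenders.mul_sum_successWeight_le_fst x1 y

end NSBox

section Relaxation

variable {X1 X2 Y : Type*} [Fintype X1] [Fintype X2] [Fintype Y]

theorem sum_mul_le_sum_abs_of_sum_le_one (W r : X1 → X2 → Y → ℝ)
    (hr0 : ∀ x1 x2 y, 0 ≤ r x1 x2 y) (hr1 : ∀ y, ∑ x1, ∑ x2, r x1 x2 y ≤ 1) :
    ∑ x1, ∑ x2, ∑ y, W x1 x2 y * r x1 x2 y ≤ ∑ x1, ∑ x2, ∑ y, |W x1 x2 y| := by
  gcongr with x1 _ x2 _ y _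
  have hr : r x1 x2 y ≤ 1 := calc
    r x1 x2 y ≤ ∑ x2', r x1 x2' y := single_le_sum (fun x2' _ => hr0 x1 x2' y) (mem_univ x2)
    _ ≤ ∑ x1', ∑ x2', r x1' x2' y :=
      single_le_sum (f := fun x1' => ∑ x2', r x1' x2' y)
        (fun _ _ => sum_nonneg fun _ _ => hr0 _ _ _) (mem_univ x1)
    _ ≤ 1 := hr1 y
  calc W x1 x2 y * r x1 x2 y ≤ |W x1 x2 y| * r x1 x2 y :=
        mul_le_mul_of_nonneg_right (le_abs_self _) (hr0 _ _ _)
    _ ≤ |W x1 x2 y| := mul_le_of_le_one_right (abs_nonneg _) hr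

theorem SNSbar_nonneg (W : X1 → X2 → Y → ℝ) (hW0 : ∀ x1 x2 y, 0 ≤ W x1 x2 y) (k1 k2 : ℕ) :
    0 ≤ SNSbar W k1 k2 := by
  refine Real.sSup_nonneg ?_
  rintro _ ⟨r, p, -, -, -, -, hr0, -, rfl⟩
  exact mul_nonneg (by positivity) <| sum_nonneg fun x1 _ => sum_nonneg fun x2 _ =>
    sum_nonneg fun y _ => mul_nonneg (hW0 x1 x2 y) (hr0 x1 x2 y)

end Relaxation

theorem SNS_le_SNSbar_general {X1 X2 Y : Type*} [Fintype X1] [Fintype X2] [Fintype Y]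
    (W : X1 → X2 → Y → ℝ)
    (hW0 : ∀ x1 x2 y, 0 ≤ W x1 x2 y)
    (k1 k2 : ℕ) (hk1 : 0 < k1) (hk2 : 0 < k2) :
    SNS W k1 k2 ≤ SNSbar W k1 k2 := by
  refine Real.sSup_le ?_ (SNSbar_nonneg W hW0 k1 k2)
  rintro _ ⟨P, hP, rfl⟩
  cases isEmpty_or_nonempty Y with
  | inl _ => simpa using SNSbar_nonneg W hW0 k1 k2
  | inr hY =>
    obtain ⟨y0⟩ := hY
    rw [sum_mul_successWeight]
    refine le_csSup ⟨1 / (k1 * k2) * ∑ x1, ∑ x2, ∑ y, |W x1 x2 y|, ?_⟩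
      ⟨successWeight P, inputWeight P y0, fun y => (hP.sum_sum_successWeight hk1 hk2 y).le,
        hP.sum_sum_inputWeight y0, fun x2 y => ?_, fun x1 y => ?_,
        fun x1 x2 y => sum_nonneg fun i1 _ => sum_nonneg fun i2 _ => hP.1 _ _ _ _ _ _ _,
        fun x1 x2 y => ?_, rfl⟩
    · rintro _ ⟨r, p, hr1, -, -, -, hr0, -, rfl⟩
      exact mul_le_mul_of_nonneg_left (sum_mul_le_sum_abs_of_sum_le_one W r hr0 hr1)
        (by positivity)
    · exact hP.inputWeight_congr y y0 ▸ hP.mul_sum_successWeight_le_fst x2 y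
    · exact hP.inputWeight_congr y y0 ▸ hP.mul_sum_successWeight_le_snd x1 y
    · exact hP.inputWeight_congr y y0 ▸ hP.successWeight_le_inputWeight x1 x2 y

/-- The non-signaling assisted success probability is at most the relaxed
non-signaling assisted success probability: `S^{NS}(W,k1,k2) ≤ S^{NS̄}(W,k1,k2)`. -/
theorem SNS_le_SNSbar {X1 X2 Y : Type*} [Fintype X1] [Fintype X2] [Fintype Y]
    (W : X1 → X2 → Y → ℝ)
    (hW0 : ∀ x1 x2 y, 0 ≤ W x1 x2 y)
    (hW1 : ∀ x1 x2, ∑ y, W x1 x2 y = 1)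
    (k1 k2 : ℕ) (hk1 : 0 < k1) (hk2 : 0 < k2) :
    SNS W k1 k2 ≤ SNSbar W k1 k2 :=
  SNS_le_SNSbar_general W hW0 k1 k2 hk1 hk2
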